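/- (Unconditional energy dissipation for the two-dimensional dimensionally-split scheme S2.) Let N ≥ 2, Δx, Δy, Δt > 0, H : ℝ → ℝ convex and differentiable, V ∈ ℝ^{N×N}, and w : ℤ² → ℝ with w(p,q) = w(−p,q) = w(p,−q). Suppose ρⁿ, ρ^{n+1/2}, ρⁿ⁺¹, ρ**, ρ*** ∈ ℝ^{N×N} satisfy: Step 1: ξ^{1/2}_{ij} = H'(ρ^{n+1/2}_{ij}) + V_{ij} + ΔxΔy·∑_{k,l=1}^{N} w(i−k,j−l)ρ**_{kl}; u_{i+1/2,j} = −(ξ^{1/2}_{i+1,j} − ξ^{1/2}_{ij})/Δx; F_{i+1/2,j} = ρ^{n+1/2}_{ij}u_{i+1/2,j}⁺ + ρ^{n+1/2}_{i+1,j}u_{i+1/2,j}⁻; F_{1/2,j} = F_{N+1/2,j} = 0; ρ^{n+1/2}_{ij} = ρⁿ_{ij} − (Δt/Δx)(F_{i+1/2,j} − F_{i−1/2,j}). Step 2: ξ^{1}_{ij} = H'(ρⁿ⁺¹_{ij}) + V_{ij} + ΔxΔy·∑_{k,l} w(i−k,j−l)ρ***_{kl}; v_{i,j+1/2} = −(ξ^{1}_{i,j+1}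 − ξ^{1}_{ij})/Δy; G_{i,j+1/2} = ρⁿ⁺¹_{ij}v_{i,j+1/2}⁺ + ρⁿ⁺¹_{i,j+1}v_{i,j+1/2}⁻; G_{i,1/2} = G_{i,N+1/2} = 0; ρⁿ⁺¹_{ij} = ρ^{n+1/2}_{ij} − (Δt/Δy)(G_{i,j+1/2} − G_{i,j−1/2}). Assume ρⁿ_{ij} ≥ 0 for all i,j. If one of the following holds: (i) ρ** = (ρⁿ + ρ^{n+1/2})/2 and ρ*** = (ρ^{n+1/2} + ρⁿ⁺¹)/2; (ii) ρ** = ρⁿ, ρ*** = ρ^{n+1/2}, and the kernel w is negative definite; (iii) ρ** = ρ^{n+1/2}, ρ*** = ρⁿ⁺¹, and the kernel w is positive definite; then E_Δ(ρⁿ⁺¹) ≤ E_Δ(ρⁿ), with no CFL restriction on Δt. -/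

import Mathlib

/-- Positive part `z⁺ = max(z,0)`. -/
noncomputable def pospart (z : ℝ) : ℝ := max z 0

/-- Negative part `z⁻ = min(z,0)`. -/
noncomputable def negpart (z : ℝ) : ℝ := min z 0

/-- The two-dimensional discrete free energy
`E_Δ(ρ) = ΔxΔy·(∑ H(ρ_{ij}) + ∑ V_{ij}ρ_{ij} + (ΔxΔy/2)·∑ w(i−k,j−l)ρ_{ij}ρ_{kl})`. -/
noncomputable def Edisc2 (N : ℕ) (dx dy : ℝ) (H : ℝ → ℝ) (V : ℕ → ℕ → ℝ)
    (w : ℤ → ℤ → ℝ) (ρ : ℕ → ℕ → ℝ) : ℝ :=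
  dx * dy * ((∑ i ∈ Finset.Icc 1 N, ∑ j ∈ Finset.Icc 1 N, H (ρ i j))
    + (∑ i ∈ Finset.Icc 1 N, ∑ j ∈ Finset.Icc 1 N, V i j * ρ i j)
    + dx * dy / 2 * ∑ i ∈ Finset.Icc 1 N, ∑ j ∈ Finset.Icc 1 N,
        ∑ k ∈ Finset.Icc 1 N, ∑ l ∈ Finset.Icc 1 N,
          w ((i : ℤ) - (k : ℤ)) ((j : ℤ) - (l : ℤ)) * ρ i j * ρ k l)

/-- The kernel `w` is negative definite: `∑ w(i−k,j−l)(a_{ij}−b_{ij})(a_{kl}−b_{kl}) ≤ 0`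
for all matrices `a, b` with nonnegative entries. -/
def NegDefKer2 (N : ℕ) (w : ℤ → ℤ → ℝ) : Prop :=
  ∀ a b : ℕ → ℕ → ℝ,
    (∀ i j, 1 ≤ i → i ≤ N → 1 ≤ j → j ≤ N → 0 ≤ a i j) →
    (∀ i j, 1 ≤ i → i ≤ N → 1 ≤ j → j ≤ N → 0 ≤ b i j) →
    ∑ i ∈ Finset.Icc 1 N, ∑ j ∈ Finset.Icc 1 N,
      ∑ k ∈ Finset.Icc 1 N, ∑ l ∈ Finset.Icc 1 N,
        w ((i : ℤ) - (k : ℤ)) ((j : ℤ) - (l : ℤ))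
          * (a i j - b i j) * (a k l - b k l) ≤ 0

/-- The kernel `w` is positive definite: `∑ w(i−k,j−l)(a_{ij}−b_{ij})(a_{kl}−b_{kl}) ≥ 0`
for all matrices `a, b` with nonnegative entries. -/
def PosDefKer2 (N : ℕ) (w : ℤ → ℤ → ℝ) : Prop :=
  ∀ a b : ℕ → ℕ → ℝ,
    (∀ i j, 1 ≤ i → i ≤ N → 1 ≤ j → j ≤ N → 0 ≤ a i j) →
    (∀ i j, 1 ≤ i → i ≤ N → 1 ≤ j → j ≤ N → 0 ≤ b i j) →
    0 ≤ ∑ i ∈ Finset.Icc 1 N, ∑ j ∈ Finset.Icc 1 N,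
      ∑ k ∈ Finset.Icc 1 N, ∑ l ∈ Finset.Icc 1 N,
        w ((i : ℤ) - (k : ℤ)) ((j : ℤ) - (l : ℤ))
          * (a i j - b i j) * (a k l - b k l)

/-!
Each half step is an implicit upwind scheme with no-flux boundary. Testing it against the
indicator of `{ρ < 0}` shows that no negative values can appear, whatever the time step.
Testing it against the potential `ξ` and summing by parts gives
`∑ ξ (ρ' - ρ) = -Δt ∑ u F ≤ 0`, because on nonnegative densities the upwind flux `F` has the
sign of the velocity `u`. The tangent-line inequality for the convex `H` and the symmetry of `w`
turn this into `E(ρ') ≤ E(ρ)`: the leftover quadratic term of the interaction energy vanishes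
for the midpoint choice and has the right sign in the two definite cases.
-/

open Finset

theorem ConvexOn.sub_le_deriv_mul_sub {S : Set ℝ} {f : ℝ → ℝ} {x y : ℝ} (hf : ConvexOn ℝ S f)
    (hx : x ∈ S) (hy : y ∈ S) (hfx : DifferentiableAt ℝ f x) :
    f x - f y ≤ deriv f x * (x - y) := by
  rcases lt_trichotomy x y with hxy | rfl | hxy
  · have h := hf.deriv_le_slope hx hy hxy hfx
    rw [slope_def_field, le_div_iff₀ (sub_pos.2 hxy)] at h
    linarith
  · simp
  · have h := hf.slope_le_deriv hy hx hxy hfx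
    rw [slope_def_field, div_le_iff₀ (sub_pos.2 hxy)] at h
    linarith

noncomputable def upwindFlux (ρl ρr u : ℝ) : ℝ := ρl * pospart u + ρr * negpart u

theorem upwindFlux_nonneg {ρl ρr : ℝ} (u : ℝ) (hl : 0 ≤ ρl) (hr : ρr ≤ 0) :
    0 ≤ upwindFlux ρl ρr u :=
  add_nonneg (mul_nonneg hl (le_max_right _ _))
    (mul_nonneg_of_nonpos_of_nonpos hr (min_le_right _ _))

theorem upwindFlux_nonpos {ρl ρr : ℝ} (u : ℝ) (hl : ρl ≤ 0) (hr : 0 ≤ ρr) :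
    upwindFlux ρl ρr u ≤ 0 :=
  add_nonpos (mul_nonpos_of_nonpos_of_nonneg hl (le_max_right _ _))
    (mul_nonpos_of_nonneg_of_nonpos hr (min_le_right _ _))

theorem mul_upwindFlux_nonneg {ρl ρr : ℝ} (u : ℝ) (hl : 0 ≤ ρl) (hr : 0 ≤ ρr) :
    0 ≤ u * upwindFlux ρl ρr u := by
  unfold upwindFlux pospart negpart
  rcases le_total u 0 with hu | hu
  · rw [max_eq_right hu, min_eq_left hu]; nlinarith [mul_nonneg hr (mul_self_nonneg u)]
  · rw [max_eq_left hu, min_eq_right hu]; nlinarith [mul_nonneg hl (mul_self_nonneg u)]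

theorem sum_Icc_mul_sub_pred_eq_neg (g F : ℕ → ℝ) {N : ℕ} (h0 : F 0 = 0) (hN : F N = 0) :
    ∑ i ∈ Icc 1 N, g i * (F i - F (i - 1)) = -∑ i ∈ Ico 1 N, (g (i + 1) - g i) * F i := by
  have key : ∀ n, ∑ i ∈ Icc 1 n, g i * (F i - F (i - 1))
      = g n * F n - ∑ i ∈ range n, (g (i + 1) - g i) * F i := by
    intro n
    induction n with
    | zero => simp [h0]
    | succ n ih =>
      rw [sum_Icc_succ_top (by omega), ih, sum_range_succ, Nat.add_sub_cancel]
      ring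
  rcases N.eq_zero_or_pos with rfl | hpos
  · simp
  rw [key, hN, range_eq_Ico, sum_eq_sum_Ico_succ_bot hpos, h0]
  ring

theorem sum_mul_eq_of_conservative_update {N : ℕ} {lam : ℝ} {ρn ρ F : ℕ → ℝ} (g : ℕ → ℝ)
    (h0 : F 0 = 0) (hN : F N = 0)
    (hupd : ∀ i, 1 ≤ i → i ≤ N → ρ i = ρn i - lam * (F i - F (i - 1))) :
    ∑ i ∈ Icc 1 N, g i * ρ i
      = ∑ i ∈ Icc 1 N, g i * ρn i + lam * ∑ i ∈ Ico 1 N, (g (i + 1) - g i) * F i := by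
  have h : ∑ i ∈ Icc 1 N, g i * ρ i
      = ∑ i ∈ Icc 1 N, g i * ρn i - lam * ∑ i ∈ Icc 1 N, g i * (F i - F (i - 1)) := by
    rw [mul_sum, ← sum_sub_distrib]
    refine sum_congr rfl fun i hi => ?_
    rw [hupd i (mem_Icc.1 hi).1 (mem_Icc.1 hi).2]
    ring
  rw [h, sum_Icc_mul_sub_pred_eq_neg g F h0 hN]
  ring

section UpwindUpdate

variable {N : ℕ} {ρn ρ F u : ℕ → ℝ}

theorem upwind_update_nonneg {lam : ℝ} (hlam : 0 ≤ lam)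
    (hF : ∀ i, 1 ≤ i → i ≤ N - 1 → F i = upwindFlux (ρ i) (ρ (i + 1)) (u i))
    (h0 : F 0 = 0) (hN : F N = 0)
    (hupd : ∀ i, 1 ≤ i → i ≤ N → ρ i = ρn i - lam * (F i - F (i - 1)))
    (hpos : ∀ i, 1 ≤ i → i ≤ N → 0 ≤ ρn i) :
    ∀ i, 1 ≤ i → i ≤ N → 0 ≤ ρ i := by
  -- test the update against the indicator of `{ρ < 0}`: the flux terms have a sign
  set χ : ℕ → ℝ := fun i => if ρ i < 0 then 1 else 0 with hχ
  have hflux : ∀ i ∈ Ico 1 N, 0 ≤ (χ (i + 1) - χ i) * F i := by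
    intro i hi
    obtain ⟨hi1, hiN⟩ := mem_Ico.1 hi
    rw [hF i hi1 (by omega), hχ]
    dsimp only
    split_ifs with hr hl hl
    · simp
    · exact mul_nonneg (by norm_num) (upwindFlux_nonneg _ (not_lt.1 hl) hr.le)
    · exact mul_nonneg_of_nonpos_of_nonpos (by norm_num) (upwindFlux_nonpos _ hl.le (not_lt.1 hr))
    · simp
  have hneg : 0 ≤ ∑ i ∈ Icc 1 N, negpart (ρ i) :=
    calc 0 ≤ ∑ i ∈ Icc 1 N, χ i * ρn i + lam * ∑ i ∈ Ico 1 N, (χ (i + 1) - χ i) * F i := by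
          refine add_nonneg (sum_nonneg fun i hi => ?_) (mul_nonneg hlam (sum_nonneg hflux))
          have := hpos i (mem_Icc.1 hi).1 (mem_Icc.1 hi).2
          simp only [hχ]
          split_ifs <;> linarith
      _ = ∑ i ∈ Icc 1 N, χ i * ρ i := (sum_mul_eq_of_conservative_update χ h0 hN hupd).symm
      _ = ∑ i ∈ Icc 1 N, negpart (ρ i) := by
          refine sum_congr rfl fun i _ => ?_
          simp only [hχ, negpart]
          split_ifs with h
          · rw [min_eq_left h.le, one_mul]
          · rw [min_eq_right (not_lt.1 h), zero_mul]
  intro i hi1 hiN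
  have hzero := (sum_eq_zero_iff_of_nonpos fun i _ => min_le_right (ρ i) 0).1
    (le_antisymm (sum_nonpos fun i _ => min_le_right (ρ i) 0) hneg) i (mem_Icc.2 ⟨hi1, hiN⟩)
  exact min_eq_right_iff.1 hzero

theorem upwind_update_dissipates {ξ : ℕ → ℝ} {dx dt : ℝ} (hdx : 0 < dx) (hdt : 0 ≤ dt)
    (hu : ∀ i, 1 ≤ i → i ≤ N - 1 → u i = -(ξ (i + 1) - ξ i) / dx)
    (hF : ∀ i, 1 ≤ i → i ≤ N - 1 → F i = upwindFlux (ρ i) (ρ (i + 1)) (u i))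
    (h0 : F 0 = 0) (hN : F N = 0)
    (hupd : ∀ i, 1 ≤ i → i ≤ N → ρ i = ρn i - dt / dx * (F i - F (i - 1)))
    (hρ : ∀ i, 1 ≤ i → i ≤ N → 0 ≤ ρ i) :
    ∑ i ∈ Icc 1 N, ξ i * (ρ i - ρn i) ≤ 0 := by
  have hflux : ∀ i ∈ Ico 1 N, (ξ (i + 1) - ξ i) * F i ≤ 0 := by
    intro i hi
    obtain ⟨hi1, hiN⟩ := mem_Ico.1 hi
    have hξ : ξ (i + 1) - ξ i = -dx * u i := by
      rw [hu i hi1 (by omega)]; field_simp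
    rw [hξ, hF i hi1 (by omega), neg_mul, neg_mul, neg_nonpos, mul_assoc]
    exact mul_nonneg hdx.le
      (mul_upwindFlux_nonneg _ (hρ i hi1 (by omega)) (hρ (i + 1) (by omega) (by omega)))
  have h := sum_mul_eq_of_conservative_update ξ h0 hN hupd
  simp only [mul_sub, sum_sub_distrib, h, add_sub_cancel_left]
  exact mul_nonpos_of_nonneg_of_nonpos (div_nonneg hdt hdx.le) (sum_nonpos hflux)

end UpwindUpdate

section Sweeps

variable {N : ℕ} {ρn ρ ξ u F : ℕ → ℕ → ℝ} {h dt : ℝ}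

theorem upwind_sweep_x (hh : 0 < h) (hdt : 0 ≤ dt)
    (hu : ∀ i j, 1 ≤ i → i ≤ N - 1 → 1 ≤ j → j ≤ N → u i j = -(ξ (i + 1) j - ξ i j) / h)
    (hF : ∀ i j, 1 ≤ i → i ≤ N - 1 → 1 ≤ j → j ≤ N →
      F i j = upwindFlux (ρ i j) (ρ (i + 1) j) (u i j))
    (hF0 : ∀ j, 1 ≤ j → j ≤ N → F 0 j = 0) (hFN : ∀ j, 1 ≤ j → j ≤ N → F N j = 0)
    (hupd : ∀ i j, 1 ≤ i → i ≤ N → 1 ≤ j → j ≤ N →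
      ρ i j = ρn i j - dt / h * (F i j - F (i - 1) j))
    (hpos : ∀ i j, 1 ≤ i → i ≤ N → 1 ≤ j → j ≤ N → 0 ≤ ρn i j) :
    (∀ i j, 1 ≤ i → i ≤ N → 1 ≤ j → j ≤ N → 0 ≤ ρ i j) ∧
      ∑ i ∈ Icc 1 N, ∑ j ∈ Icc 1 N, ξ i j * (ρ i j - ρn i j) ≤ 0 := by
  have hρ : ∀ i j, 1 ≤ i → i ≤ N → 1 ≤ j → j ≤ N → 0 ≤ ρ i j := fun i j hi hi' hj hj' =>
    upwind_update_nonneg (div_nonneg hdt hh.le) (fun i h1 h2 => hF i j h1 h2 hj hj')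
      (hF0 j hj hj') (hFN j hj hj') (fun i h1 h2 => hupd i j h1 h2 hj hj')
      (fun i h1 h2 => hpos i j h1 h2 hj hj') i hi hi'
  refine ⟨hρ, ?_⟩
  rw [sum_comm]
  refine sum_nonpos fun j hj => ?_
  obtain ⟨hj, hj'⟩ := mem_Icc.1 hj
  exact upwind_update_dissipates hh hdt (fun i h1 h2 => hu i j h1 h2 hj hj')
    (fun i h1 h2 => hF i j h1 h2 hj hj') (hF0 j hj hj') (hFN j hj hj')
    (fun i h1 h2 => hupd i j h1 h2 hj hj') (fun i h1 h2 => hρ i j h1 h2 hj hj')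

theorem upwind_sweep_y (hh : 0 < h) (hdt : 0 ≤ dt)
    (hu : ∀ i j, 1 ≤ i → i ≤ N → 1 ≤ j → j ≤ N - 1 → u i j = -(ξ i (j + 1) - ξ i j) / h)
    (hF : ∀ i j, 1 ≤ i → i ≤ N → 1 ≤ j → j ≤ N - 1 →
      F i j = upwindFlux (ρ i j) (ρ i (j + 1)) (u i j))
    (hF0 : ∀ i, 1 ≤ i → i ≤ N → F i 0 = 0) (hFN : ∀ i, 1 ≤ i → i ≤ N → F i N = 0)
    (hupd : ∀ i j, 1 ≤ i → i ≤ N → 1 ≤ j → j ≤ N →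
      ρ i j = ρn i j - dt / h * (F i j - F i (j - 1)))
    (hpos : ∀ i j, 1 ≤ i → i ≤ N → 1 ≤ j → j ≤ N → 0 ≤ ρn i j) :
    (∀ i j, 1 ≤ i → i ≤ N → 1 ≤ j → j ≤ N → 0 ≤ ρ i j) ∧
      ∑ i ∈ Icc 1 N, ∑ j ∈ Icc 1 N, ξ i j * (ρ i j - ρn i j) ≤ 0 := by
  have hρ : ∀ i j, 1 ≤ i → i ≤ N → 1 ≤ j → j ≤ N → 0 ≤ ρ i j := fun i j hi hi' hj hj' =>
    upwind_update_nonneg (div_nonneg hdt hh.le) (fun j h1 h2 => hF i j hi hi' h1 h2)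
      (hF0 i hi hi') (hFN i hi hi') (fun j h1 h2 => hupd i j hi hi' h1 h2)
      (fun j h1 h2 => hpos i j hi hi' h1 h2) j hj hj'
  refine ⟨hρ, sum_nonpos fun i hi => ?_⟩
  obtain ⟨hi, hi'⟩ := mem_Icc.1 hi
  exact upwind_update_dissipates hh hdt (fun j h1 h2 => hu i j hi hi' h1 h2)
    (fun j h1 h2 => hF i j hi hi' h1 h2) (hF0 i hi hi') (hFN i hi hi')
    (fun j h1 h2 => hupd i j hi hi' h1 h2) (fun j h1 h2 => hρ i j hi hi' h1 h2)

end Sweeps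

noncomputable def convForm (N : ℕ) (w : ℤ → ℤ → ℝ) (x y : ℕ → ℕ → ℝ) : ℝ :=
  ∑ i ∈ Icc 1 N, ∑ j ∈ Icc 1 N, ∑ k ∈ Icc 1 N, ∑ l ∈ Icc 1 N,
    w ((i : ℤ) - (k : ℤ)) ((j : ℤ) - (l : ℤ)) * x i j * y k l

/-- Cases (i)–(iii) of the scheme for the convolution argument `ρs` of a step from `b` to `a`. -/
def IsAdmissibleConvArg (N : ℕ) (w : ℤ → ℤ → ℝ) (b a ρs : ℕ → ℕ → ℝ) : Prop :=
  (∀ i j, 1 ≤ i → i ≤ N → 1 ≤ j → j ≤ N → ρs i j = (b i j + a i j) / 2) ∨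
    ((∀ i j, 1 ≤ i → i ≤ N → 1 ≤ j → j ≤ N → ρs i j = b i j) ∧ NegDefKer2 N w) ∨
    ((∀ i j, 1 ≤ i → i ≤ N → 1 ≤ j → j ≤ N → ρs i j = a i j) ∧ PosDefKer2 N w)

theorem Edisc2_eq (N : ℕ) (dx dy : ℝ) (H : ℝ → ℝ) (V : ℕ → ℕ → ℝ) (w : ℤ → ℤ → ℝ)
    (ρ : ℕ → ℕ → ℝ) :
    Edisc2 N dx dy H V w ρ = dx * dy * ((∑ i ∈ Icc 1 N, ∑ j ∈ Icc 1 N, H (ρ i j))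
      + (∑ i ∈ Icc 1 N, ∑ j ∈ Icc 1 N, V i j * ρ i j) + dx * dy / 2 * convForm N w ρ ρ) :=
  rfl

theorem sum_sum_sum_sum_comm {M : Type*} [AddCommMonoid M] (s : Finset ℕ)
    (f : ℕ → ℕ → ℕ → ℕ → M) :
    ∑ i ∈ s, ∑ j ∈ s, ∑ k ∈ s, ∑ l ∈ s, f i j k l
      = ∑ k ∈ s, ∑ l ∈ s, ∑ i ∈ s, ∑ j ∈ s, f i j k l :=
  calc ∑ i ∈ s, ∑ j ∈ s, ∑ k ∈ s, ∑ l ∈ s, f i j k l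
      = ∑ i ∈ s, ∑ k ∈ s, ∑ j ∈ s, ∑ l ∈ s, f i j k l := sum_congr rfl fun _ _ => sum_comm
    _ = ∑ k ∈ s, ∑ i ∈ s, ∑ j ∈ s, ∑ l ∈ s, f i j k l := sum_comm
    _ = ∑ k ∈ s, ∑ i ∈ s, ∑ l ∈ s, ∑ j ∈ s, f i j k l :=
        sum_congr rfl fun _ _ => sum_congr rfl fun _ _ => sum_comm
    _ = ∑ k ∈ s, ∑ l ∈ s, ∑ i ∈ s, ∑ j ∈ s, f i j k l := sum_congr rfl fun _ _ => sum_comm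

section ConvForm

variable {N : ℕ} {w : ℤ → ℤ → ℝ}

theorem convForm_comm (hw1 : ∀ p q : ℤ, w (-p) q = w p q) (hw2 : ∀ p q : ℤ, w p (-q) = w p q)
    (x y : ℕ → ℕ → ℝ) : convForm N w x y = convForm N w y x := by
  unfold convForm
  rw [sum_sum_sum_sum_comm]
  refine sum_congr rfl fun k _ => sum_congr rfl fun l _ =>
    sum_congr rfl fun i _ => sum_congr rfl fun j _ => ?_
  rw [← neg_sub (k : ℤ), ← neg_sub (l : ℤ), hw1, hw2]
  ring

theorem convForm_eq_mul_of_eq_mul {x y z : ℕ → ℕ → ℝ} (c : ℝ)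
    (h : ∀ k l, 1 ≤ k → k ≤ N → 1 ≤ l → l ≤ N → y k l = c * z k l) :
    convForm N w x y = c * convForm N w x z := by
  unfold convForm
  simp only [mul_sum]
  refine sum_congr rfl fun i _ => sum_congr rfl fun j _ =>
    sum_congr rfl fun k hk => sum_congr rfl fun l hl => ?_
  rw [h k l (mem_Icc.1 hk).1 (mem_Icc.1 hk).2 (mem_Icc.1 hl).1 (mem_Icc.1 hl).2]
  ring

theorem convForm_sub_convForm_le (hw1 : ∀ p q : ℤ, w (-p) q = w p q)
    (hw2 : ∀ p q : ℤ, w p (-q) = w p q) {a b ρs : ℕ → ℕ → ℝ}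
    (ha : ∀ i j, 1 ≤ i → i ≤ N → 1 ≤ j → j ≤ N → 0 ≤ a i j)
    (hb : ∀ i j, 1 ≤ i → i ≤ N → 1 ≤ j → j ≤ N → 0 ≤ b i j)
    (hadm : IsAdmissibleConvArg N w b a ρs) :
    convForm N w a a - convForm N w b b ≤ 2 * convForm N w (fun i j => a i j - b i j) ρs := by
  set d : ℕ → ℕ → ℝ := fun i j => a i j - b i j with hd
  have hsplit : convForm N w a a - convForm N w b b
      = 2 * convForm N w d ρs + convForm N w d (fun k l => a k l + b k l - 2 * ρs k l) := by
    rw [show convForm N w a a - convForm N w b b = convForm N w a a + convForm N w a b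
        - convForm N w b a - convForm N w b b by rw [convForm_comm hw1 hw2 a b]; ring]
    unfold convForm
    simp only [mul_sum, ← sum_add_distrib, ← sum_sub_distrib]
    refine sum_congr rfl fun i _ => sum_congr rfl fun j _ =>
      sum_congr rfl fun k _ => sum_congr rfl fun l _ => ?_
    ring
  have hrest : ∀ c : ℝ, (∀ k l, 1 ≤ k → k ≤ N → 1 ≤ l → l ≤ N →
      a k l + b k l - 2 * ρs k l = c * d k l) →
      convForm N w d (fun k l => a k l + b k l - 2 * ρs k l) = c * convForm N w d d :=
    fun c => convForm_eq_mul_of_eq_mul c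
  rw [hsplit]
  rcases hadm with hρs | ⟨hρs, hker⟩ | ⟨hρs, hker⟩
  · rw [hrest 0 fun k l hk hk' hl hl' => by rw [hρs k l hk hk' hl hl']; ring]
    simp
  · have hdd : convForm N w d d ≤ 0 := hker a b ha hb
    rw [hrest 1 fun k l hk hk' hl hl' => by rw [hρs k l hk hk' hl hl', hd]; ring]
    linarith
  · have hdd : 0 ≤ convForm N w d d := hker a b ha hb
    rw [hrest (-1) fun k l hk hk' hl hl' => by rw [hρs k l hk hk' hl hl', hd]; ring]
    linarith

end ConvForm

theorem Edisc2_le_of_sum_mul_sub_nonpos {N : ℕ} {dx dy : ℝ} (hdx : 0 < dx) (hdy : 0 < dy)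
    {H : ℝ → ℝ} (hHconv : ConvexOn ℝ Set.univ H) (hHdiff : Differentiable ℝ H)
    {V : ℕ → ℕ → ℝ} {w : ℤ → ℤ → ℝ}
    (hw1 : ∀ p q : ℤ, w (-p) q = w p q) (hw2 : ∀ p q : ℤ, w p (-q) = w p q)
    {b a ρs ξ : ℕ → ℕ → ℝ}
    (hξ : ∀ i j, 1 ≤ i → i ≤ N → 1 ≤ j → j ≤ N →
      ξ i j = deriv H (a i j) + V i j
        + dx * dy * ∑ k ∈ Icc 1 N, ∑ l ∈ Icc 1 N,
            w ((i : ℤ) - (k : ℤ)) ((j : ℤ) - (l : ℤ)) * ρs k l)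
    (hdiss : ∑ i ∈ Icc 1 N, ∑ j ∈ Icc 1 N, ξ i j * (a i j - b i j) ≤ 0)
    (hadm : IsAdmissibleConvArg N w b a ρs)
    (ha : ∀ i j, 1 ≤ i → i ≤ N → 1 ≤ j → j ≤ N → 0 ≤ a i j)
    (hb : ∀ i j, 1 ≤ i → i ≤ N → 1 ≤ j → j ≤ N → 0 ≤ b i j) :
    Edisc2 N dx dy H V w a ≤ Edisc2 N dx dy H V w b := by
  set d : ℕ → ℕ → ℝ := fun i j => a i j - b i j with hd
  have hlocal : ∀ i ∈ Icc 1 N, ∀ j ∈ Icc 1 N,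
      H (a i j) - H (b i j) + (V i j * a i j - V i j * b i j)
        + dx * dy * ((∑ k ∈ Icc 1 N, ∑ l ∈ Icc 1 N,
            w ((i : ℤ) - (k : ℤ)) ((j : ℤ) - (l : ℤ)) * ρs k l) * d i j)
        ≤ ξ i j * d i j := by
    intro i hi j hj
    have htan := hHconv.sub_le_deriv_mul_sub (Set.mem_univ (a i j)) (Set.mem_univ (b i j))
      (hHdiff (a i j))
    rw [hξ i j (mem_Icc.1 hi).1 (mem_Icc.1 hi).2 (mem_Icc.1 hj).1 (mem_Icc.1 hj).2, hd]
    linarith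
  have hconv : ∑ i ∈ Icc 1 N, ∑ j ∈ Icc 1 N, (∑ k ∈ Icc 1 N, ∑ l ∈ Icc 1 N,
      w ((i : ℤ) - (k : ℤ)) ((j : ℤ) - (l : ℤ)) * ρs k l) * d i j = convForm N w d ρs := by
    simp only [convForm, sum_mul]
    refine sum_congr rfl fun i _ => sum_congr rfl fun j _ =>
      sum_congr rfl fun k _ => sum_congr rfl fun l _ => ?_
    ring
  have hsum := sum_le_sum fun i hi => sum_le_sum (hlocal i hi)
  simp only [sum_add_distrib, sum_sub_distrib, ← mul_sum, hconv] at hsum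
  have hQ := mul_le_mul_of_nonneg_left (convForm_sub_convForm_le hw1 hw2 ha hb hadm)
    (by positivity : (0 : ℝ) ≤ dx * dy / 2)
  rw [Edisc2_eq, Edisc2_eq]
  refine mul_le_mul_of_nonneg_left ?_ (by positivity)
  linarith

theorem stmt_13_general (N : ℕ) (dx dy dt : ℝ)
    (hdx : 0 < dx) (hdy : 0 < dy) (hdt : 0 < dt)
    (H : ℝ → ℝ) (hHconv : ConvexOn ℝ Set.univ H) (hHdiff : Differentiable ℝ H)
    (V : ℕ → ℕ → ℝ) (w : ℤ → ℤ → ℝ)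
    (hw1 : ∀ p q : ℤ, w (-p) q = w p q) (hw2 : ∀ p q : ℤ, w p (-q) = w p q)
    (ρn ρh ρn1 ρss ρsss ξh ξ1 u v F G : ℕ → ℕ → ℝ)
    -- Step 1: implicit evolution in the x-direction
    (hξh : ∀ i j, 1 ≤ i → i ≤ N → 1 ≤ j → j ≤ N →
      ξh i j = deriv H (ρh i j) + V i j
        + dx * dy * ∑ k ∈ Finset.Icc 1 N, ∑ l ∈ Finset.Icc 1 N,
            w ((i : ℤ) - (k : ℤ)) ((j : ℤ) - (l : ℤ)) * ρss k l)
    (hu : ∀ i j, 1 ≤ i → i ≤ N - 1 → 1 ≤ j → j ≤ N →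
      u i j = -(ξh (i + 1) j - ξh i j) / dx)
    (hF : ∀ i j, 1 ≤ i → i ≤ N - 1 → 1 ≤ j → j ≤ N →
      F i j = ρh i j * pospart (u i j) + ρh (i + 1) j * negpart (u i j))
    (hF0 : ∀ j, 1 ≤ j → j ≤ N → F 0 j = 0)
    (hFN : ∀ j, 1 ≤ j → j ≤ N → F N j = 0)
    (hupd1 : ∀ i j, 1 ≤ i → i ≤ N → 1 ≤ j → j ≤ N →
      ρh i j = ρn i j - dt / dx * (F i j - F (i - 1) j))
    -- Step 2: implicit evolution in the y-direction
    (hξ1 : ∀ i j, 1 ≤ i → i ≤ N → 1 ≤ j → j ≤ N →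
      ξ1 i j = deriv H (ρn1 i j) + V i j
        + dx * dy * ∑ k ∈ Finset.Icc 1 N, ∑ l ∈ Finset.Icc 1 N,
            w ((i : ℤ) - (k : ℤ)) ((j : ℤ) - (l : ℤ)) * ρsss k l)
    (hv : ∀ i j, 1 ≤ i → i ≤ N → 1 ≤ j → j ≤ N - 1 →
      v i j = -(ξ1 i (j + 1) - ξ1 i j) / dy)
    (hG : ∀ i j, 1 ≤ i → i ≤ N → 1 ≤ j → j ≤ N - 1 →
      G i j = ρn1 i j * pospart (v i j) + ρn1 i (j + 1) * negpart (v i j))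
    (hG0 : ∀ i, 1 ≤ i → i ≤ N → G i 0 = 0)
    (hGN : ∀ i, 1 ≤ i → i ≤ N → G i N = 0)
    (hupd2 : ∀ i j, 1 ≤ i → i ≤ N → 1 ≤ j → j ≤ N →
      ρn1 i j = ρh i j - dt / dy * (G i j - G i (j - 1)))
    (hpos : ∀ i j, 1 ≤ i → i ≤ N → 1 ≤ j → j ≤ N → 0 ≤ ρn i j)
    (hcase :
      ((∀ i j, 1 ≤ i → i ≤ N → 1 ≤ j → j ≤ N → ρss i j = (ρn i j + ρh i j) / 2) ∧
        (∀ i j, 1 ≤ i → i ≤ N → 1 ≤ j → j ≤ N → ρsss i j = (ρh i j + ρn1 i j) / 2)) ∨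
      ((∀ i j, 1 ≤ i → i ≤ N → 1 ≤ j → j ≤ N → ρss i j = ρn i j) ∧
        (∀ i j, 1 ≤ i → i ≤ N → 1 ≤ j → j ≤ N → ρsss i j = ρh i j) ∧
        NegDefKer2 N w) ∨
      ((∀ i j, 1 ≤ i → i ≤ N → 1 ≤ j → j ≤ N → ρss i j = ρh i j) ∧
        (∀ i j, 1 ≤ i → i ≤ N → 1 ≤ j → j ≤ N → ρsss i j = ρn1 i j) ∧
        PosDefKer2 N w)) :
    Edisc2 N dx dy H V w ρn1 ≤ Edisc2 N dx dy H V w ρn := by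
  obtain ⟨hρh, hdiss1⟩ := upwind_sweep_x hdx hdt.le hu hF hF0 hFN hupd1 hpos
  obtain ⟨hρn1, hdiss2⟩ := upwind_sweep_y hdy hdt.le hv hG hG0 hGN hupd2 hρh
  have step1 := fun hadm : IsAdmissibleConvArg N w ρn ρh ρss =>
    Edisc2_le_of_sum_mul_sub_nonpos hdx hdy hHconv hHdiff hw1 hw2 hξh hdiss1 hadm hρh hpos
  have step2 := fun hadm : IsAdmissibleConvArg N w ρh ρn1 ρsss =>
    Edisc2_le_of_sum_mul_sub_nonpos hdx hdy hHconv hHdiff hw1 hw2 hξ1 hdiss2 hadm hρn1 hρh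
  rcases hcase with ⟨hss, hsss⟩ | ⟨hss, hsss, hker⟩ | ⟨hss, hsss, hker⟩
  · exact (step2 (.inl hsss)).trans (step1 (.inl hss))
  · exact (step2 (.inr (.inl ⟨hsss, hker⟩))).trans (step1 (.inr (.inl ⟨hss, hker⟩)))
  · exact (step2 (.inr (.inr ⟨hsss, hker⟩))).trans (step1 (.inr (.inr ⟨hss, hker⟩)))

/-- unconditional energy dissipation for the two-dimensional
dimensionally-split implicit scheme S2, for each of the three admissible choices of the
convolution variables `ρ**` and `ρ***`, with no CFL restriction on `Δt`. -/
theorem stmt_13 (N : ℕ) (hN : 2 ≤ N) (dx dy dt : ℝ)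
    (hdx : 0 < dx) (hdy : 0 < dy) (hdt : 0 < dt)
    (H : ℝ → ℝ) (hHconv : ConvexOn ℝ Set.univ H) (hHdiff : Differentiable ℝ H)
    (V : ℕ → ℕ → ℝ) (w : ℤ → ℤ → ℝ)
    (hw1 : ∀ p q : ℤ, w (-p) q = w p q) (hw2 : ∀ p q : ℤ, w p (-q) = w p q)
    (ρn ρh ρn1 ρss ρsss ξh ξ1 u v F G : ℕ → ℕ → ℝ)
    -- Step 1: implicit evolution in the x-direction
    (hξh : ∀ i j, 1 ≤ i → i ≤ N → 1 ≤ j → j ≤ N →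
      ξh i j = deriv H (ρh i j) + V i j
        + dx * dy * ∑ k ∈ Finset.Icc 1 N, ∑ l ∈ Finset.Icc 1 N,
            w ((i : ℤ) - (k : ℤ)) ((j : ℤ) - (l : ℤ)) * ρss k l)
    (hu : ∀ i j, 1 ≤ i → i ≤ N - 1 → 1 ≤ j → j ≤ N →
      u i j = -(ξh (i + 1) j - ξh i j) / dx)
    (hF : ∀ i j, 1 ≤ i → i ≤ N - 1 → 1 ≤ j → j ≤ N →
      F i j = ρh i j * pospart (u i j) + ρh (i + 1) j * negpart (u i j))
    (hF0 : ∀ j, 1 ≤ j → j ≤ N → F 0 j = 0)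
    (hFN : ∀ j, 1 ≤ j → j ≤ N → F N j = 0)
    (hupd1 : ∀ i j, 1 ≤ i → i ≤ N → 1 ≤ j → j ≤ N →
      ρh i j = ρn i j - dt / dx * (F i j - F (i - 1) j))
    -- Step 2: implicit evolution in the y-direction
    (hξ1 : ∀ i j, 1 ≤ i → i ≤ N → 1 ≤ j → j ≤ N →
      ξ1 i j = deriv H (ρn1 i j) + V i j
        + dx * dy * ∑ k ∈ Finset.Icc 1 N, ∑ l ∈ Finset.Icc 1 N,
            w ((i : ℤ) - (k : ℤ)) ((j : ℤ) - (l : ℤ)) * ρsss k l)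
    (hv : ∀ i j, 1 ≤ i → i ≤ N → 1 ≤ j → j ≤ N - 1 →
      v i j = -(ξ1 i (j + 1) - ξ1 i j) / dy)
    (hG : ∀ i j, 1 ≤ i → i ≤ N → 1 ≤ j → j ≤ N - 1 →
      G i j = ρn1 i j * pospart (v i j) + ρn1 i (j + 1) * negpart (v i j))
    (hG0 : ∀ i, 1 ≤ i → i ≤ N → G i 0 = 0)
    (hGN : ∀ i, 1 ≤ i → i ≤ N → G i N = 0)
    (hupd2 : ∀ i j, 1 ≤ i → i ≤ N → 1 ≤ j → j ≤ N →
      ρn1 i j = ρh i j - dt / dy * (G i j - G i (j - 1)))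
    (hpos : ∀ i j, 1 ≤ i → i ≤ N → 1 ≤ j → j ≤ N → 0 ≤ ρn i j)
    (hcase :
      ((∀ i j, 1 ≤ i → i ≤ N → 1 ≤ j → j ≤ N → ρss i j = (ρn i j + ρh i j) / 2) ∧
        (∀ i j, 1 ≤ i → i ≤ N → 1 ≤ j → j ≤ N → ρsss i j = (ρh i j + ρn1 i j) / 2)) ∨
      ((∀ i j, 1 ≤ i → i ≤ N → 1 ≤ j → j ≤ N → ρss i j = ρn i j) ∧
        (∀ i j, 1 ≤ i → i ≤ N → 1 ≤ j → j ≤ N → ρsss i j = ρh i j) ∧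
        NegDefKer2 N w) ∨
      ((∀ i j, 1 ≤ i → i ≤ N → 1 ≤ j → j ≤ N → ρss i j = ρh i j) ∧
        (∀ i j, 1 ≤ i → i ≤ N → 1 ≤ j → j ≤ N → ρsss i j = ρn1 i j) ∧
        PosDefKer2 N w)) :
    Edisc2 N dx dy H V w ρn1 ≤ Edisc2 N dx dy H V w ρn :=
  stmt_13_general N dx dy dt hdx hdy hdt H hHconv hHdiff V w hw1 hw2 ρn ρh ρn1 ρss ρsss ξh ξ1 u v F
    G hξh hu hF hF0 hFN hupd1 hξ1 hv hG hG0 hGN hupd2 hpos hcase
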